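/- Let 𝔤 be the 4-dimensional real Lie algebra e(2) ⊕ ℝ with basis e₁, e₂, e₃, e₄ and nonzero brackets [e₁,e₃] = e₂, [e₂,e₃] = −e₁. A 2-cocycle F of 𝔤 is a 2-coboundary (i.e. there exists a linear functional λ ∈ 𝔤* with F(x,y) = λ([x,y]) for all x, y) if and only if F(e₁,e₂) = 0 and F(e₃,e₄) = 0. -/

import Mathlib

noncomputable section

/-- The Lie bracket of the Lie algebra `e(2) ⊕ ℝ` on `ℝ⁴`, in the basis
`e₁ = e 0, e₂ = e 1, e₃ = e 2, e₄ = e 3` with nonzero brackets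
`[e₁,e₃] = e₂`, `[e₂,e₃] = -e₁`. -/
def bra (x y : Fin 4 → ℝ) : Fin 4 → ℝ :=
  ![-(x 1 * y 2 - x 2 * y 1), x 0 * y 2 - x 2 * y 0, 0, 0]

/-- The standard basis `e₁, e₂, e₃, e₄` (indexed from `0`). -/
def e (a : Fin 4) : Fin 4 → ℝ := Pi.single a 1

/-- `F` is a 2-cocycle of `e(2) ⊕ ℝ` with values in `ℝ`. -/
def IsCocycle (F : (Fin 4 → ℝ) →ₗ[ℝ] (Fin 4 → ℝ) →ₗ[ℝ] ℝ) : Prop :=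
  ∀ x y z : Fin 4 → ℝ, F (bra x y) z + F (bra y z) x + F (bra z x) y = 0

/-!
Since `e₄` is central, the cocycle identity at `(x, y, e₄)` reduces to `F([x,y], e₄) = 0`; applied to
`[e₂,e₃] = -e₁` and `[e₁,e₃] = e₂` it gives `F(e₁,e₄) = F(e₂,e₄) = 0`. An alternating form is
determined by its values `F(eᵢ,eⱼ)` for `i < j`, and `λ(e₁) = -F(e₂,e₃)`, `λ(e₂) = F(e₁,e₃)` (forced by
the same two brackets) makes `λ([·,·])` match `F` on all of them except `(e₁,e₂)` and `(e₃,e₄)`,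
where the bracket vanishes; so matching there means exactly `F(e₁,e₂) = F(e₃,e₄) = 0`.
-/

theorem LinearMap.IsAlt.ext_basis_of_lt {ι R M N : Type*} [LinearOrder ι] [CommSemiring R]
    [AddCommMonoid M] [Module R M] [AddCommGroup N] [Module R N] (b : Module.Basis ι R M)
    {B B' : M →ₗ[R] M →ₗ[R] N} (hB : B.IsAlt) (hB' : B'.IsAlt)
    (h : ∀ i j, i < j → B (b i) (b j) = B' (b i) (b j)) : B = B' :=
  LinearMap.ext_basis b b fun i j => by
    rcases lt_trichotomy i j with hij | rfl | hji
    · exact h i j hij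
    · rw [hB.self_eq_zero, hB'.self_eq_zero]
    · rw [← hB.neg, ← hB'.neg, h j i hji]

def braₗ : (Fin 4 → ℝ) →ₗ[ℝ] (Fin 4 → ℝ) →ₗ[ℝ] (Fin 4 → ℝ) :=
  LinearMap.mk₂ ℝ bra
    (fun x x' y => by ext i; fin_cases i <;> simp [bra] <;> ring)
    (fun c x y => by ext i; fin_cases i <;> simp [bra] <;> ring)
    (fun x y y' => by ext i; fin_cases i <;> simp [bra] <;> ring)
    (fun c x y => by ext i; fin_cases i <;> simp [bra] <;> ring)

@[simp]
lemma braₗ_apply (x y : Fin 4 → ℝ) : braₗ x y = bra x y := rfl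

lemma bra_self (x : Fin 4 → ℝ) : bra x x = 0 := by
  ext i; fin_cases i <;> simp [bra] <;> ring

lemma bra_e_three_left (x : Fin 4 → ℝ) : bra (e 3) x = 0 := by
  ext i; fin_cases i <;> simp [bra, e]

lemma bra_e_three_right (x : Fin 4 → ℝ) : bra x (e 3) = 0 := by
  ext i; fin_cases i <;> simp [bra, e]

lemma bra_e_zero_e_one : bra (e 0) (e 1) = 0 := by
  ext i; fin_cases i <;> simp [bra, e]

lemma bra_e_zero_e_two : bra (e 0) (e 2) = e 1 := by
  ext i; fin_cases i <;> simp [bra, e]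

lemma bra_e_one_e_two : bra (e 1) (e 2) = -e 0 := by
  ext i; fin_cases i <;> simp [bra, e]

section Cocycle

variable {F : (Fin 4 → ℝ) →ₗ[ℝ] (Fin 4 → ℝ) →ₗ[ℝ] ℝ}

lemma IsCocycle.apply_bra_e_three (hF : IsCocycle F) (x y : Fin 4 → ℝ) :
    F (bra x y) (e 3) = 0 := by
  simpa [bra_e_three_left, bra_e_three_right] using hF x y (e 3)

lemma IsCocycle.apply_e_zero_e_three (hF : IsCocycle F) : F (e 0) (e 3) = 0 := by
  simpa [bra_e_one_e_two] using hF.apply_bra_e_three (e 1) (e 2)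

lemma IsCocycle.apply_e_one_e_three (hF : IsCocycle F) : F (e 1) (e 3) = 0 := by
  simpa [bra_e_zero_e_two] using hF.apply_bra_e_three (e 0) (e 2)

variable (F) in
def cocyclePrimitive : (Fin 4 → ℝ) →ₗ[ℝ] ℝ :=
  -F (e 1) (e 2) • LinearMap.proj 0 + F (e 0) (e 2) • LinearMap.proj 1

lemma cocyclePrimitive_e_zero : cocyclePrimitive F (e 0) = -F (e 1) (e 2) := by
  simp [cocyclePrimitive, e]

lemma cocyclePrimitive_e_one : cocyclePrimitive F (e 1) = F (e 0) (e 2) := by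
  simp [cocyclePrimitive, e]

lemma IsCocycle.eq_compr₂_cocyclePrimitive (hFalt : F.IsAlt) (hF : IsCocycle F)
    (h01 : F (e 0) (e 1) = 0) (h23 : F (e 2) (e 3) = 0) :
    F = braₗ.compr₂ (cocyclePrimitive F) := by
  refine LinearMap.IsAlt.ext_basis_of_lt (Pi.basisFun ℝ (Fin 4)) hFalt
    (fun x => by simp [bra_self]) fun i j hij => ?_
  simp only [Pi.basisFun_apply, LinearMap.compr₂_apply, braₗ_apply]
  change F (e i) (e j) = cocyclePrimitive F (bra (e i) (e j))
  fin_cases i <;> fin_cases j <;> dsimp only [Fin.reduceFinMk] at hij ⊢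
  all_goals first | exact absurd hij (by decide) | skip
  · rw [h01, bra_e_zero_e_one, map_zero]
  · rw [bra_e_zero_e_two, cocyclePrimitive_e_one]
  · rw [hF.apply_e_zero_e_three, bra_e_three_right, map_zero]
  · rw [bra_e_one_e_two, map_neg, cocyclePrimitive_e_zero, neg_neg]
  · rw [hF.apply_e_one_e_three, bra_e_three_right, map_zero]
  · rw [h23, bra_e_three_right, map_zero]

end Cocycle

/-- a 2-cocycle `F` of `e(2) ⊕ ℝ` is a 2-coboundary (i.e. of the form
`F(x,y) = λ([x,y])` for a linear functional `λ`) iff `F(e₁,e₂) = 0` and `F(e₃,e₄) = 0`. -/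
theorem two_coboundary_iff
    (F : (Fin 4 → ℝ) →ₗ[ℝ] (Fin 4 → ℝ) →ₗ[ℝ] ℝ)
    (hFalt : ∀ x : Fin 4 → ℝ, F x x = 0) (hF : IsCocycle F) :
    (∃ lam : (Fin 4 → ℝ) →ₗ[ℝ] ℝ, ∀ x y : Fin 4 → ℝ, F x y = lam (bra x y)) ↔
      (F (e 0) (e 1) = 0 ∧ F (e 2) (e 3) = 0) := by
  constructor
  · rintro ⟨lam, hlam⟩
    rw [hlam, hlam, bra_e_zero_e_one, bra_e_three_right, map_zero]
    exact ⟨rfl, rfl⟩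
  · rintro ⟨h01, h23⟩
    have h := hF.eq_compr₂_cocyclePrimitive hFalt h01 h23
    exact ⟨cocyclePrimitive F, fun x y => LinearMap.congr_fun₂ h x y⟩
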